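/- The volume of the symmetric difference of two balls in ℝ^m of the same radius δ > 0 with centers x, y satisfies vol(B(x,δ) Δ B(y,δ)) ≤ C_m δ^{m−1} |x − y| for a constant C_m depending only on m. -/
import Mathlib

open Set Metric MeasureTheory

lemma pow_sub_pow_le_aux (n : ℕ) {a b : ℝ} (ha : 0 ≤ a) (hab : a ≤ b) :
    b ^ n - a ^ n ≤ n * b ^ (n - 1) * (b - a) := by
  induction n with
  | zero => simp
  | succ k ih =>
    have hb : 0 ≤ b := ha.trans hab
    rcases Nat.eq_zero_or_pos k with rfl | hk
    · simp
    have hbb : b * b ^ (k - 1) = b ^ k := by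
      rw [← pow_succ']; congr 1; omega
    have h2 : b * (b ^ k - a ^ k) ≤ b * (k * b ^ (k - 1) * (b - a)) :=
      mul_le_mul_of_nonneg_left ih hb
    have h3 : (b - a) * a ^ k ≤ (b - a) * b ^ k :=
      mul_le_mul_of_nonneg_left (pow_le_pow_left₀ ha hab k) (by linarith)
    have h1 : b ^ (k + 1) - a ^ (k + 1) = b * (b ^ k - a ^ k) + (b - a) * a ^ k := by ring
    have h4 : b * (k * b ^ (k - 1) * (b - a)) = k * b ^ k * (b - a) := by
      rw [show b * (k * b ^ (k - 1) * (b - a)) = (k : ℝ) * (b * b ^ (k - 1)) * (b - a) by ring,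
        hbb]
    simp only [Nat.add_sub_cancel]
    push_cast
    nlinarith [pow_nonneg hb k]

/-- The volume of the symmetric difference of two balls of equal radius `δ` in `ℝ^m`
is bounded by `C_m δ^{m-1} |x − y|` for a constant depending only on the dimension. -/
theorem volume_symmDiff_balls_le (m : ℕ) (hm : 1 ≤ m) :
    ∃ C : ℝ, 0 < C ∧
      ∀ (δ : ℝ), 0 < δ → ∀ x y : EuclideanSpace ℝ (Fin m),
        (volume (symmDiff (Metric.ball x δ) (Metric.ball y δ))).toReal
          ≤ C * δ ^ ((m : ℝ) - 1) * dist x y := by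
  have hE : Module.finrank ℝ (EuclideanSpace ℝ (Fin m)) = m := finrank_euclideanSpace_fin
  set c := (volume (ball (0 : EuclideanSpace ℝ (Fin m)) 1)).toReal with hc
  have hcpos : 0 < c :=
    ENNReal.toReal_pos (measure_ball_pos _ _ one_pos).ne' measure_ball_lt_top.ne
  refine ⟨2 * c * (m * 3 ^ (m - 1) + 1), by positivity, ?_⟩
  intro δ hδ x y
  set d := dist x y with hdd
  have hd : 0 ≤ d := dist_nonneg
  have hrw : δ ^ ((m : ℝ) - 1) = δ ^ (m - 1) := by
    rw [← Real.rpow_natCast δ (m - 1), Nat.cast_sub hm, Nat.cast_one]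
  rw [hrw]
  -- volumes of balls and closed balls
  have hball : ∀ (z : EuclideanSpace ℝ (Fin m)) (r : ℝ), 0 < r →
      (volume (ball z r)).toReal = r ^ m * c := by
    intro z r hr
    rw [Measure.addHaar_ball_of_pos volume z hr, hE, ENNReal.toReal_mul,
      ENNReal.toReal_ofReal (pow_nonneg hr.le m)]
  have hcb : ∀ (z : EuclideanSpace ℝ (Fin m)) (r : ℝ), 0 ≤ r →
      (volume (closedBall z r)).toReal = r ^ m * c := by
    intro z r hr
    rw [Measure.addHaar_closedBall volume z hr, hE, ENNReal.toReal_mul,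
      ENNReal.toReal_ofReal (pow_nonneg hr m)]
  -- the annulus volume
  have hann : ∀ z : EuclideanSpace ℝ (Fin m),
      (volume (closedBall z (δ + d) \ ball z δ)).toReal = (δ + d) ^ m * c - δ ^ m * c := by
    intro z
    have hsub : ball z δ ⊆ closedBall z (δ + d) :=
      ball_subset_closedBall.trans (closedBall_subset_closedBall (by linarith))
    rw [measure_diff hsub measurableSet_ball.nullMeasurableSet measure_ball_lt_top.ne,
      ENNReal.toReal_sub_of_le (measure_mono hsub) measure_closedBall_lt_top.ne,
      hcb z _ (by linarith), hball z δ hδ]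
  -- inclusion of the symmetric difference in the two annuli
  have hsub1 : symmDiff (ball x δ) (ball y δ) ⊆
      (closedBall y (δ + d) \ ball y δ) ∪ (closedBall x (δ + d) \ ball x δ) := by
    intro z hz
    rcases hz with ⟨hz1, hz2⟩ | ⟨hz1, hz2⟩
    · left
      refine ⟨?_, hz2⟩
      simp only [mem_closedBall] at *
      have := dist_triangle z x y
      simp only [mem_ball] at hz1
      exact le_trans this (by linarith)
    · right
      refine ⟨?_, hz2⟩
      simp only [mem_closedBall] at *
      have := dist_triangle z y x
      simp only [mem_ball] at hz1
      rw [dist_comm y x] at this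
      exact le_trans this (by linarith)
  have hfin : ∀ z : EuclideanSpace ℝ (Fin m),
      volume (closedBall z (δ + d) \ ball z δ) ≠ ⊤ :=
    fun z => ((measure_mono diff_subset).trans_lt measure_closedBall_lt_top).ne
  have hLHS1 : (volume (symmDiff (ball x δ) (ball y δ))).toReal
      ≤ 2 * ((δ + d) ^ m * c - δ ^ m * c) := by
    have h1 : volume (symmDiff (ball x δ) (ball y δ)) ≤
        volume (closedBall y (δ + d) \ ball y δ) + volume (closedBall x (δ + d) \ ball x δ) :=
      (measure_mono hsub1).trans (measure_union_le _ _)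
    have h2 := ENNReal.toReal_mono (by simp [ENNReal.add_ne_top, hfin x, hfin y]) h1
    rw [ENNReal.toReal_add (hfin y) (hfin x), hann y, hann x] at h2
    linarith
  have hsub2 : symmDiff (ball x δ) (ball y δ) ⊆ ball x δ ∪ ball y δ := by
    intro z hz
    rcases hz with ⟨hz1, _⟩ | ⟨hz1, _⟩
    · exact Or.inl hz1
    · exact Or.inr hz1
  have hLHS2 : (volume (symmDiff (ball x δ) (ball y δ))).toReal ≤ 2 * (δ ^ m * c) := by
    have h1 : volume (symmDiff (ball x δ) (ball y δ)) ≤ volume (ball x δ) + volume (ball y δ) :=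
      (measure_mono hsub2).trans (measure_union_le _ _)
    have h2 := ENNReal.toReal_mono
      (by simp [ENNReal.add_ne_top, measure_ball_lt_top.ne]) h1
    rw [ENNReal.toReal_add measure_ball_lt_top.ne measure_ball_lt_top.ne,
      hball x δ hδ, hball y δ hδ] at h2
    linarith
  have hpow : δ ^ (m - 1) * δ = δ ^ m := by
    rw [← pow_succ]; congr 1; omega
  have hδpm : 0 ≤ δ ^ (m - 1) := pow_nonneg hδ.le _
  rcases le_total d (2 * δ) with h | h
  · -- small d : use the annulus bound
    have key : (δ + d) ^ m - δ ^ m ≤ m * (δ + d) ^ (m - 1) * d := by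
      have := pow_sub_pow_le_aux m hδ.le (by linarith : δ ≤ δ + d)
      simpa using this
    have h3 : (δ + d) ^ (m - 1) ≤ (3 * δ) ^ (m - 1) :=
      pow_le_pow_left₀ (by linarith) (by linarith) _
    have h4 : (3 * δ) ^ (m - 1) = 3 ^ (m - 1) * δ ^ (m - 1) := mul_pow 3 δ (m - 1)
    calc (volume (symmDiff (ball x δ) (ball y δ))).toReal
        ≤ 2 * ((δ + d) ^ m * c - δ ^ m * c) := hLHS1
      _ = 2 * c * ((δ + d) ^ m - δ ^ m) := by ring
      _ ≤ 2 * c * (m * (δ + d) ^ (m - 1) * d) := by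
          apply mul_le_mul_of_nonneg_left key (by positivity)
      _ ≤ 2 * c * (m * (3 ^ (m - 1) * δ ^ (m - 1)) * d) := by
          apply mul_le_mul_of_nonneg_left _ (by positivity)
          apply mul_le_mul_of_nonneg_right _ hd
          rw [← h4]
          exact mul_le_mul_of_nonneg_left h3 (Nat.cast_nonneg m)
      _ ≤ 2 * c * (↑m * 3 ^ (m - 1) + 1) * δ ^ (m - 1) * d := by
          nlinarith [mul_nonneg hδpm hd, mul_nonneg (mul_nonneg hcpos.le hδpm) hd]
  · -- large d : balls almost disjoint, use the trivial bound
    calc (volume (symmDiff (ball x δ) (ball y δ))).toReal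
        ≤ 2 * (δ ^ m * c) := hLHS2
      _ = 2 * c * (δ ^ (m - 1) * δ) := by rw [hpow]; ring
      _ ≤ 2 * c * (δ ^ (m - 1) * (d / 2) * 2) := by nlinarith [mul_nonneg hcpos.le hδpm]
      _ ≤ 2 * c * (↑m * 3 ^ (m - 1) + 1) * δ ^ (m - 1) * d := by
          have h1 : (1 : ℝ) ≤ (m : ℝ) * 3 ^ (m - 1) + 1 := by nlinarith [mul_nonneg (Nat.cast_nonneg m : (0:ℝ) ≤ m) (pow_nonneg (by norm_num : (0:ℝ) ≤ 3) (m-1))]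
          nlinarith [mul_nonneg (mul_nonneg hcpos.le hδpm) hd,
            mul_nonneg hδpm hd]
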